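/- Let μ be a probability measure on the unit circle S¹ with arclength distance d, and let p ∈ S¹ be a local or global minimum of the Fréchet functional F_μ(q) = (1/2)∫_{S¹} d(x,q)² dμ(x). Then the cut locus of p has μ-measure zero: μ({−p}) = 0. -/

import Mathlib

open MeasureTheory Real Set Filter

noncomputable section

/-- The unit circle `S¹` in `ℝ² ≃ ℂ`. -/
abbrev S1 := {x : ℂ // ‖x‖ = 1}

/-- The arclength distance on `S¹`. -/
def dS1 (x p : S1) : ℝ := 2 * Real.arcsin (‖(x : ℂ) - (p : ℂ)‖ / 2)

/-- The Fréchet functional of a measure `μ` on `S¹`. -/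
def frechet (μ : Measure S1) (p : S1) : ℝ := (1/2) * ∫ x, (dS1 x p)^2 ∂μ

/-- The normal coordinate chart centered at `p`: `θ ↦ R_θ p`. -/
def chart (p : S1) (θ : ℝ) : S1 :=
  ⟨Complex.exp (θ * Complex.I) * (p : ℂ), by
    rw [norm_mul, Complex.norm_exp_ofReal_mul_I, p.2, mul_one]⟩

/-- The inverse chart, with values in `[-π, π)`. -/
def invChart (p₀ : S1) (p : S1) : ℝ :=
  if Complex.arg ((p : ℂ) / (p₀ : ℂ)) = π then -π else Complex.arg ((p : ℂ) / (p₀ : ℂ))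

/-- The image measure `μ_{p₀}` of `μ` in the normal chart centered at `p₀`. -/
def chartMeasure (μ : Measure S1) (p₀ : S1) : Measure ℝ := Measure.map (invChart p₀) μ

/-- `m(μ_{p₀})`, the Euclidean mean of the image measure in the chart centered at `p₀`. -/
def mMean (μ : Measure S1) (p₀ : S1) : ℝ := ∫ t, t ∂(chartMeasure μ p₀)

/-- The antipodal point (cut locus) of `p`. -/
def antipode (p : S1) : S1 := ⟨-(p : ℂ), by rw [norm_neg]; exact p.2⟩

/-- The (left-continuous extension of the) derivative of `θ ↦ F_μ(e_{p₀}(θ))`. -/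
def extDerivS1 (μ : Measure S1) (p₀ : S1) (θ : ℝ) : ℝ :=
  if 0 ≤ θ then θ - 2*π*(chartMeasure μ p₀ (Ico (-π) (-π+θ))).toReal - mMean μ p₀
  else θ + 2*π*(chartMeasure μ p₀ (Ico (π+θ) π)).toReal - mMean μ p₀

def basePt : S1 := ⟨1, by norm_num⟩

/-- The (unnormalized) arclength measure on `S¹`, of total mass `2π`. -/
def arcMeasure : Measure S1 := Measure.map (chart basePt) (volume.restrict (Ico (-π) π))

/-- Property `P(p, α, φ)` for a density `f` on `S¹`. -/
def propP (f : S1 → ℝ) (p : S1) (α φ : ℝ) : Prop :=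
  ∀ θ ∈ Ico (-π) π, φ ≤ |θ| → f (chart p θ) ≤ (1 - α)/(2*π)

open Topology

/-!
Write `T = invChart p` for the chart coordinate centred at `p`. Since `d(x, R_θ p) ≤ |T x - θ|`,
integrating gives `F(R_θ p) ≤ F(p) - θ ∫ T dμ + θ²/2` for every `θ`. For `0 ≤ θ ≤ π` the
antipode `-p`, where `T = -π`, has squared distance `(π + θ)² - 4πθ` to `R_θ p`, which improves
the bound to `F(R_θ p) ≤ F(p) - θ (∫ T dμ + 2π μ{-p}) + θ²/2`. At a local minimum
the first-order coefficients on both sides must have the right sign: `∫ T dμ ≥ 0` and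
`∫ T dμ + 2π μ{-p} ≤ 0`, so `μ{-p} = 0`.
-/

lemma nonpos_of_isLocalMin_of_le {f : ℝ → ℝ} {c K ε : ℝ} (hf : IsLocalMin f 0) (hε : 0 < ε)
    (hle : ∀ θ ∈ Ioc 0 ε, f θ ≤ f 0 - c * θ + K * θ ^ 2) : c ≤ 0 := by
  have hev : ∀ᶠ θ in 𝓝[>] 0, c ≤ K * θ := by
    filter_upwards [nhdsWithin_le_nhds hf, Ioc_mem_nhdsGT hε, self_mem_nhdsWithin]
      with θ hmin hθ hpos
    have hmul : c * θ ≤ (K * θ) * θ := by nlinarith [hle θ hθ]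
    exact le_of_mul_le_mul_right hmul hpos
  have hlim : Tendsto (fun θ => K * θ) (𝓝[>] 0) (𝓝 0) := by
    simpa using ((continuous_const_mul K).tendsto 0).mono_left nhdsWithin_le_nhds
  exact ge_of_tendsto hlim hev

section Integral

variable {α : Type*}

lemma sub_sq_eq_fun (f : α → ℝ) (c : ℝ) :
    (fun x => (f x - c) ^ 2) = fun x => (f x ^ 2 - 2 * c * f x) + c ^ 2 := by
  ext x
  ring

variable [MeasurableSpace α] {μ : Measure α} {f : α → ℝ}

lemma integrable_sub_sq [IsFiniteMeasure μ] (hf : Integrable f μ)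
    (hf2 : Integrable (fun x => f x ^ 2) μ) (c : ℝ) :
    Integrable (fun x => (f x - c) ^ 2) μ := by
  rw [sub_sq_eq_fun]
  exact (hf2.sub (hf.const_mul (2 * c))).add (integrable_const _)

lemma integral_sub_sq [IsProbabilityMeasure μ] (hf : Integrable f μ)
    (hf2 : Integrable (fun x => f x ^ 2) μ) (c : ℝ) :
    ∫ x, (f x - c) ^ 2 ∂μ = ∫ x, f x ^ 2 ∂μ - 2 * c * ∫ x, f x ∂μ + c ^ 2 := by
  have hlin : Integrable (fun x => f x ^ 2 - 2 * c * f x) μ := hf2.sub (hf.const_mul (2 * c))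
  rw [sub_sq_eq_fun, integral_add hlin (integrable_const _),
    integral_sub hf2 (hf.const_mul (2 * c)), integral_const_mul, integral_const, probReal_univ,
    one_smul]

end Integral

lemma S1.coe_ne_zero (p : S1) : (p : ℂ) ≠ 0 :=
  norm_ne_zero_iff.mp (by rw [p.2]; exact one_ne_zero)

lemma dS1_nonneg (x q : S1) : 0 ≤ dS1 x q :=
  mul_nonneg zero_le_two (arcsin_nonneg.mpr (by positivity))

lemma dS1_le_pi (x q : S1) : dS1 x q ≤ π := by
  have := arcsin_le_pi_div_two (‖(x : ℂ) - q‖ / 2)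
  rw [dS1]
  linarith

lemma continuous_dS1_left (q : S1) : Continuous fun x => dS1 x q :=
  continuous_const.mul (continuous_arcsin.comp
    (((continuous_subtype_val.sub continuous_const).norm).div_const 2))

lemma continuous_chart (p : S1) : Continuous (chart p) :=
  ((Complex.continuous_exp.comp (Complex.continuous_ofReal.mul continuous_const)).mul
    continuous_const).subtype_mk _

lemma chart_zero (p : S1) : chart p 0 = p :=
  Subtype.ext (by simp [chart])

lemma chart_pi (p : S1) : chart p π = antipode p :=
  Subtype.ext (by simp [chart, antipode, Complex.exp_pi_mul_I])

lemma norm_chart_sub_chart (p : S1) (t s : ℝ) :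
    ‖(chart p t : ℂ) - chart p s‖ = 2 * |sin ((t - s) / 2)| := by
  have h : (chart p t : ℂ) - chart p s
      = Complex.exp (s * Complex.I) * (Complex.exp (Complex.I * (t - s : ℝ)) - 1) * p := by
    simp only [chart, mul_sub, sub_mul, mul_one, ← Complex.exp_add]
    push_cast
    ring_nf
  rw [h, norm_mul, norm_mul, Complex.norm_exp_ofReal_mul_I, p.2, one_mul, mul_one,
    Complex.norm_exp_I_mul_ofReal_sub_one, norm_mul, norm_two, Real.norm_eq_abs]

lemma dS1_chart_chart (p : S1) {t s : ℝ} (h : |t - s| ≤ π) :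
    dS1 (chart p t) (chart p s) = |t - s| := by
  have habs : |(t - s) / 2| = |t - s| / 2 := by rw [abs_div, abs_two]
  rw [dS1, norm_chart_sub_chart, mul_div_cancel_left₀ _ two_ne_zero,
    abs_sin_eq_sin_abs_of_abs_le_pi (by rw [habs]; linarith [abs_nonneg (t - s)]), habs,
    arcsin_sin (by linarith [abs_nonneg (t - s), pi_pos]) (by linarith)]
  ring

lemma dS1_chart_chart_le (p : S1) (t s : ℝ) : dS1 (chart p t) (chart p s) ≤ |t - s| := by
  rcases le_or_gt |t - s| π with h | h
  · exact (dS1_chart_chart p h).le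
  · exact (dS1_le_pi _ _).trans h.le

lemma exp_invChart_mul_I (p x : S1) : Complex.exp (invChart p x * Complex.I) = x / p := by
  have h := Complex.norm_mul_exp_arg_mul_I ((x : ℂ) / p)
  rw [norm_div, x.2, p.2, div_one, Complex.ofReal_one, one_mul] at h
  unfold invChart
  split_ifs with hπ
  · rw [← h, hπ]
    push_cast
    rw [neg_mul, Complex.exp_neg_pi_mul_I, Complex.exp_pi_mul_I]
  · exact h

lemma chart_invChart (p x : S1) : chart p (invChart p x) = x :=
  Subtype.ext (by simp only [chart, exp_invChart_mul_I, div_mul_cancel₀ _ p.coe_ne_zero])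

lemma abs_invChart_le (p x : S1) : |invChart p x| ≤ π := by
  unfold invChart
  split_ifs
  · rw [abs_neg, abs_of_pos pi_pos]
  · exact abs_le.mpr ⟨(Complex.neg_pi_lt_arg _).le, Complex.arg_le_pi _⟩

lemma invChart_antipode (p : S1) : invChart p (antipode p) = -π := by
  simp [invChart, antipode, neg_div, div_self p.coe_ne_zero, Complex.arg_neg_one]

lemma measurable_invChart (p : S1) : Measurable (invChart p) := by
  have h : Measurable fun x : S1 => Complex.arg ((x : ℂ) / p) :=
    Complex.measurable_arg.comp (measurable_subtype_coe.div measurable_const)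
  exact Measurable.ite (h (measurableSet_singleton π)) measurable_const h

lemma dS1_eq_abs_invChart (p x : S1) : dS1 x p = |invChart p x| := by
  calc dS1 x p = dS1 (chart p (invChart p x)) (chart p 0) := by rw [chart_invChart, chart_zero]
  _ = |invChart p x| := by rw [dS1_chart_chart p (by simpa using abs_invChart_le p x), sub_zero]

lemma dS1_chart_sq_le (p x : S1) (θ : ℝ) : dS1 x (chart p θ) ^ 2 ≤ (invChart p x - θ) ^ 2 := by
  rw [← sq_abs (invChart p x - θ)]
  conv_lhs => rw [← chart_invChart p x]
  exact pow_le_pow_left₀ (dS1_nonneg _ _) (dS1_chart_chart_le _ _ _) 2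

lemma dS1_antipode_chart (p : S1) {θ : ℝ} (hθ : θ ∈ Icc 0 π) :
    dS1 (antipode p) (chart p θ) = π - θ := by
  rw [← chart_pi, dS1_chart_chart p (by rw [abs_of_nonneg] <;> linarith [hθ.1, hθ.2]),
    abs_of_nonneg (by linarith [hθ.2])]

lemma dS1_chart_sq_le_sub_indicator (p x : S1) {θ : ℝ} (hθ : θ ∈ Icc 0 π) :
    dS1 x (chart p θ) ^ 2
      ≤ (invChart p x - θ) ^ 2 - ({antipode p} : Set S1).indicator (fun _ => 4 * π * θ) x := by
  by_cases hx : x = antipode p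
  · subst hx
    rw [indicator_of_mem (mem_singleton _), dS1_antipode_chart p hθ, invChart_antipode]
    exact le_of_eq (by ring)
  · rw [indicator_of_notMem (by rwa [mem_singleton_iff]), sub_zero]
    exact dS1_chart_sq_le p x θ

section Frechet

variable (μ : Measure S1) (p : S1)

lemma frechet_eq_integral_invChart_sq : frechet μ p = 1 / 2 * ∫ x, invChart p x ^ 2 ∂μ := by
  simp only [frechet, dS1_eq_abs_invChart, sq_abs]

section Integrable

variable [IsFiniteMeasure μ]

lemma integrable_dS1_sq (q : S1) : Integrable (fun x => dS1 x q ^ 2) μ :=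
  Integrable.of_bound ((continuous_dS1_left q).pow 2).aestronglyMeasurable (π ^ 2)
    (ae_of_all _ fun x => by
      rw [norm_pow, Real.norm_eq_abs, abs_of_nonneg (dS1_nonneg x q)]
      exact pow_le_pow_left₀ (dS1_nonneg x q) (dS1_le_pi x q) 2)

lemma integrable_invChart : Integrable (invChart p) μ :=
  Integrable.of_bound (measurable_invChart p).aestronglyMeasurable π
    (ae_of_all _ (abs_invChart_le p))

lemma integrable_invChart_sq : Integrable (fun x => invChart p x ^ 2) μ :=
  Integrable.of_bound ((measurable_invChart p).pow_const 2).aestronglyMeasurable (π ^ 2)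
    (ae_of_all _ fun x => by
      rw [norm_pow, Real.norm_eq_abs]
      exact pow_le_pow_left₀ (abs_nonneg _) (abs_invChart_le p x) 2)

end Integrable

variable [IsProbabilityMeasure μ]

lemma frechet_chart_le (θ : ℝ) :
    frechet μ (chart p θ) ≤ frechet μ p - (∫ x, invChart p x ∂μ) * θ + θ ^ 2 / 2 := by
  have hmono := integral_mono (integrable_dS1_sq μ _)
    (integrable_sub_sq (integrable_invChart μ p) (integrable_invChart_sq μ p) θ)
    (dS1_chart_sq_le p · θ)
  rw [integral_sub_sq (integrable_invChart μ p) (integrable_invChart_sq μ p)] at hmono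
  rw [frechet_eq_integral_invChart_sq μ p, frechet]
  linarith

lemma frechet_chart_le_of_mem_Icc {θ : ℝ} (hθ : θ ∈ Icc 0 π) :
    frechet μ (chart p θ) ≤
      frechet μ p - (∫ x, invChart p x ∂μ + 2 * π * μ.real {antipode p}) * θ + θ ^ 2 / 2 := by
  have hsq := integrable_sub_sq (integrable_invChart μ p) (integrable_invChart_sq μ p) θ
  have hind : Integrable (({antipode p} : Set S1).indicator fun _ => 4 * π * θ) μ :=
    (integrable_const _).indicator (measurableSet_singleton _)
  have hmono := integral_mono (integrable_dS1_sq μ _) (hsq.sub hind)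
    (dS1_chart_sq_le_sub_indicator p · hθ)
  simp only [Pi.sub_apply] at hmono
  rw [integral_sub hsq hind,
    integral_sub_sq (integrable_invChart μ p) (integrable_invChart_sq μ p),
    integral_indicator_const _ (measurableSet_singleton _), smul_eq_mul] at hmono
  rw [frechet_eq_integral_invChart_sq μ p, frechet]
  linarith

end Frechet

lemma IsLocalMin.comp_chart {β : Type*} [Preorder β] {f : S1 → β} {p : S1}
    (hf : IsLocalMin f p) : IsLocalMin (fun θ => f (chart p θ)) 0 := by
  rw [← chart_zero p] at hf
  exact hf.comp_continuous (continuous_chart p).continuousAt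

/-- the cut locus of a (local or global) minimum of the Fréchet functional
has `μ`-measure zero. -/
theorem cutlocus_null_of_min (μ : Measure S1) [IsProbabilityMeasure μ] (p : S1)
    (h : IsLocalMin (frechet μ) p ∨ ∀ q : S1, frechet μ p ≤ frechet μ q) :
    μ {antipode p} = 0 := by
  set m := ∫ x, invChart p x ∂μ
  set a := μ.real {antipode p}
  have hloc : IsLocalMin (fun θ => frechet μ (chart p θ)) 0 :=
    (h.elim id Eventually.of_forall).comp_chart
  have hright : m + 2 * π * a ≤ 0 :=
    nonpos_of_isLocalMin_of_le (K := 1 / 2) hloc pi_pos fun θ hθ => by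
      have := frechet_chart_le_of_mem_Icc μ p (Ioc_subset_Icc_self hθ)
      rw [chart_zero]
      linarith
  have hleft : -m ≤ 0 := by
    rw [← neg_zero] at hloc
    refine nonpos_of_isLocalMin_of_le (K := 1 / 2)
      (hloc.comp_continuous continuous_neg.continuousAt) one_pos fun θ _ => ?_
    have := frechet_chart_le μ p (-θ)
    simp only [Function.comp, neg_zero, chart_zero]
    linarith
  have ha : a = 0 := le_antisymm (by nlinarith [pi_pos]) measureReal_nonneg
  exact (measureReal_eq_zero_iff (measure_ne_top μ _)).mp ha
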